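/- For f ∈ B_σ, any real x_i, any interval [x_i, x_{i+1}] of length at most δ, and any integer l ≥ 0, ∫_{x_i}^{x_{i+1}} |f⁽ˡ⁾(x_i)|² dx ≤ e^{δ²} Σ_{ν=0}^∞ ∫_{x_i}^{x_{i+1}} |f^{(l+ν)}(x)|²/ν! dx. -/

import Mathlib

/-!
Expanding the entire function `f⁽ˡ⁾` in its Taylor series at a point `t`,
`f⁽ˡ⁾(x_i) = Σ_ν f^{(l+ν)}(t) (x_i - t)^ν / ν!`, and applying Cauchy–Schwarz with weights `1 / ν!`
gives `|f⁽ˡ⁾(x_i)|² ≤ e^{(x_i - t)²} Σ_ν |f^{(l+ν)}(t)|² / ν!`, because `Σ_ν r^{2ν} / ν! = e^{r²}`.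
For `t ∈ [x_i, x_{i+1}]` the exponential is at most `e^{δ²}`; integrating in `t` and exchanging
the (nonnegative) sum with the integral gives the estimate.
-/

open Real Set MeasureTheory ENNReal NNReal

/-- `F` is an entire function of exponential type at most `σ`. -/
def HasExpTypeLE (σ : ℝ) (F : ℂ → ℂ) : Prop :=
  ∀ ε > 0, ∃ C > 0, ∀ z : ℂ, ‖F z‖ ≤ C * Real.exp ((σ + ε) * ‖z‖)

/-- Paley–Wiener description of the space `B_σ` of `σ`-band-limited functions. -/
def BandLimited (σ : ℝ) (F : ℂ → ℂ) : Prop :=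
  Differentiable ℂ F ∧ HasExpTypeLE σ F ∧ MemLp (fun x : ℝ => F x) 2 volume

open scoped Nat

theorem ENNReal.lintegral_mul_sq_le {α : Type*} [MeasurableSpace α] (μ : Measure α)
    {f g : α → ℝ≥0∞} (hf : AEMeasurable f μ) (hg : AEMeasurable g μ) :
    (∫⁻ a, f a * g a ∂μ) ^ 2 ≤ (∫⁻ a, f a ^ 2 ∂μ) * ∫⁻ a, g a ^ 2 ∂μ := by
  have holder := ENNReal.lintegral_mul_le_Lp_mul_Lq μ Real.HolderConjugate.two_two hf hg
  have sqrt_sq : ∀ x : ℝ≥0∞, (x ^ (1 / 2 : ℝ)) ^ 2 = x := fun x => by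
    rw [← ENNReal.rpow_natCast, ← ENNReal.rpow_mul]; norm_num
  simpa only [Pi.mul_apply, ENNReal.rpow_two, mul_pow, sqrt_sq] using pow_le_pow_left' holder 2

theorem ENNReal.tsum_mul_div_sq_le {ι : Type*} (x y w : ι → ℝ≥0∞) :
    (∑' i, x i * y i / w i) ^ 2 ≤ (∑' i, x i ^ 2 / w i) * ∑' i, y i ^ 2 / w i := by
  let _ : MeasurableSpace ι := ⊤
  -- Cauchy–Schwarz for the measure on `ι` giving mass `1 / w i` to the point `i`.
  have weighted_sum (u : ι → ℝ≥0∞) :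
      ∫⁻ i, u i ∂(Measure.count.withDensity fun i => (w i)⁻¹) = ∑' i, u i / w i := by
    rw [lintegral_withDensity_eq_lintegral_mul _ measurable_from_top measurable_from_top,
      lintegral_count' measurable_from_top]
    simp only [Pi.mul_apply, div_eq_mul_inv, mul_comm]
  simpa only [weighted_sum] using ENNReal.lintegral_mul_sq_le
    (Measure.count.withDensity fun i => (w i)⁻¹) (f := x) (g := y)
    measurable_from_top.aemeasurable measurable_from_top.aemeasurable

theorem ENNReal.tsum_ofReal_pow_div_factorial {x : ℝ} (hx : 0 ≤ x) :
    ∑' n, ENNReal.ofReal x ^ n / n ! = ENNReal.ofReal (Real.exp x) := by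
  have hterm (n : ℕ) : ENNReal.ofReal x ^ n / n ! = ENNReal.ofReal (x ^ n / n !) := by
    rw [ENNReal.ofReal_div_of_pos (by positivity), ENNReal.ofReal_pow hx, ENNReal.ofReal_natCast]
  rw [tsum_congr hterm, ← ENNReal.ofReal_tsum_of_nonneg (fun n => by positivity)
    (Real.summable_pow_div_factorial x), Real.exp_eq_exp_ℝ, NormedSpace.exp_eq_tsum_div]

theorem Complex.enorm_sq_le_exp_mul_tsum_iteratedDeriv {E : Type*} [NormedAddCommGroup E]
    [NormedSpace ℂ E] [CompleteSpace E] {f : ℂ → E} (hf : Differentiable ℂ f) (c z : ℂ) :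
    ‖f z‖ₑ ^ 2 ≤ ENNReal.ofReal (Real.exp (‖z - c‖ ^ 2)) *
      ∑' n, ‖iteratedDeriv n f c‖ₑ ^ 2 / n ! := by
  have taylor := Complex.hasSum_taylorSeries_of_entire hf c z
  have enorm_inv_factorial (n : ℕ) : ‖(n ! : ℂ)⁻¹‖ₑ = (n ! : ℝ≥0∞)⁻¹ := by
    rw [← ofReal_norm, norm_inv, Complex.norm_natCast,
      ENNReal.ofReal_inv_of_pos (by positivity), ENNReal.ofReal_natCast]
  calc ‖f z‖ₑ ^ 2 ≤ (∑' n, ‖z - c‖ₑ ^ n * ‖iteratedDeriv n f c‖ₑ / n !) ^ 2 := by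
        gcongr
        rw [← taylor.tsum_eq]
        refine enorm_tsum_le_tsum_enorm.trans_eq (tsum_congr fun n => ?_)
        simp only [enorm_smul, enorm_pow, enorm_inv_factorial, div_eq_mul_inv, mul_comm]
    _ ≤ (∑' n, (‖z - c‖ₑ ^ n) ^ 2 / n !) * ∑' n, ‖iteratedDeriv n f c‖ₑ ^ 2 / n ! :=
        ENNReal.tsum_mul_div_sq_le _ _ _
    _ = _ := by
        rw [← ENNReal.tsum_ofReal_pow_div_factorial (sq_nonneg ‖z - c‖)]
        congr 1
        refine tsum_congr fun n => ?_
        rw [ENNReal.ofReal_pow (norm_nonneg _), ofReal_norm, pow_right_comm]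

theorem iteratedDeriv_iteratedDeriv {𝕜 F : Type*} [NontriviallyNormedField 𝕜]
    [NormedAddCommGroup F] [NormedSpace 𝕜 F] (m n : ℕ) (f : 𝕜 → F) :
    iteratedDeriv m (iteratedDeriv n f) = iteratedDeriv (n + m) f := by
  simp only [iteratedDeriv_eq_iterate, add_comm n, Function.iterate_add_apply]

theorem Complex.differentiable_iteratedDeriv {f : ℂ → ℂ} (hf : Differentiable ℂ f) (n : ℕ) :
    Differentiable ℂ (iteratedDeriv n f) :=
  hf.contDiff.differentiable_iteratedDeriv n (WithTop.coe_lt_top _)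

theorem Complex.iteratedDeriv_comp_ofReal {f : ℂ → ℂ} (hf : Differentiable ℂ f) (n : ℕ) :
    iteratedDeriv n (fun t : ℝ => f t) = fun t : ℝ => iteratedDeriv n f t := by
  induction n generalizing f with
  | zero => simp
  | succ n ih =>
    have deriv_comp_ofReal : deriv (fun t : ℝ => f t) = fun t : ℝ => deriv f t :=
      funext fun t => (hf t).hasDerivAt.comp_ofReal.deriv
    rw [iteratedDeriv_succ', iteratedDeriv_succ', deriv_comp_ofReal, ih hf.deriv]

theorem stmt_9_general (σ : ℝ) (F : ℂ → ℂ) (hF : BandLimited σ F)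
    (δ : ℝ) (xi xi1 : ℝ) (hgap : xi1 - xi ≤ δ) (l : ℕ) :
    ∫⁻ _t in Icc xi xi1, ((‖iteratedDeriv l (fun t : ℝ => F t) xi‖₊ : ℝ≥0∞) ^ 2)
      ≤ ENNReal.ofReal (Real.exp (δ ^ 2)) *
        ∑' ν : ℕ,
          (∫⁻ t in Icc xi xi1, ((‖iteratedDeriv (l + ν) (fun t : ℝ => F t) t‖₊ : ℝ≥0∞) ^ 2)) /
            (Nat.factorial ν : ℝ≥0∞) := by
  have hdiff := Complex.differentiable_iteratedDeriv hF.1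
  have pointwise (t : ℝ) (ht : t ∈ Icc xi xi1) : ‖iteratedDeriv l F xi‖ₑ ^ 2 ≤
      ENNReal.ofReal (Real.exp (δ ^ 2)) * ∑' ν, ‖iteratedDeriv (l + ν) F t‖ₑ ^ 2 / ν ! := by
    refine (Complex.enorm_sq_le_exp_mul_tsum_iteratedDeriv (hdiff l) t xi).trans ?_
    have dist_le : ‖(xi : ℂ) - t‖ ≤ δ := by
      rw [← Complex.ofReal_sub, Complex.norm_real, Real.norm_eq_abs, abs_sub_comm,
        abs_of_nonneg (sub_nonneg.2 ht.1)]
      linarith [ht.2]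
    simp only [iteratedDeriv_iteratedDeriv]
    gcongr
  have measurable_term (n : ℕ) : Measurable fun t : ℝ => ‖iteratedDeriv n F t‖ₑ ^ 2 :=
    ((hdiff n).continuous.comp Complex.continuous_ofReal).enorm.measurable.pow_const 2
  simp only [Complex.iteratedDeriv_comp_ofReal hF.1, ← enorm_eq_nnnorm]
  calc _ ≤ ∫⁻ t in Icc xi xi1, ENNReal.ofReal (Real.exp (δ ^ 2)) *
          ∑' ν, ‖iteratedDeriv (l + ν) F t‖ₑ ^ 2 / ν ! :=
        setLIntegral_mono
          ((Measurable.tsum fun ν => (measurable_term _).div_const _).const_mul _) pointwise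
    _ = _ := by
        simp only [div_eq_mul_inv]
        rw [lintegral_const_mul' _ _ ofReal_ne_top,
          lintegral_tsum fun ν => ((measurable_term _).mul_const _).aemeasurable]
        simp only [lintegral_mul_const _ (measurable_term _)]

/-- For `f ∈ B_σ`, an interval `[x_i, x_{i+1}]` of length at most `δ`, and `l ≥ 0`,
`∫_{x_i}^{x_{i+1}} |f⁽ˡ⁾(x_i)|² dx ≤ e^{δ²} Σ_{ν=0}^∞ ∫_{x_i}^{x_{i+1}} |f^{(l+ν)}(x)|²/ν! dx`. -/
theorem stmt_9 (σ : ℝ) (hσ : 0 < σ) (F : ℂ → ℂ) (hF : BandLimited σ F)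
    (δ : ℝ) (hδ : 0 < δ) (xi xi1 : ℝ) (hlt : xi < xi1) (hgap : xi1 - xi ≤ δ) (l : ℕ) :
    ∫⁻ _t in Icc xi xi1, ((‖iteratedDeriv l (fun t : ℝ => F t) xi‖₊ : ℝ≥0∞) ^ 2)
      ≤ ENNReal.ofReal (Real.exp (δ ^ 2)) *
        ∑' ν : ℕ,
          (∫⁻ t in Icc xi xi1, ((‖iteratedDeriv (l + ν) (fun t : ℝ => F t) t‖₊ : ℝ≥0∞) ^ 2)) /
            (Nat.factorial ν : ℝ≥0∞) :=
  stmt_9_general σ F hF δ xi xi1 hgap l
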